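/- Let g, h, y be three positive locally integrable functions on [t₀, ∞) such that y' is locally integrable on [t₀, ∞), satisfying dy/dt ≤ g·y + h for all t ≥ t₀, and ∫_t^{t+r} g(s) ds ≤ a₁, ∫_t^{t+r} h(s) ds ≤ a₂, ∫_t^{t+r} y(s) ds ≤ a₃ for all t ≥ t₀, where r, a₁, a₂, a₃ are positive constants. Then y(t+r) ≤ (a₃/r + a₂)·e^{a₁} for all t ≥ t₀. -/

import Mathlib

open MeasureTheory intervalIntegral Set Filter

/-! On a window `[s, t + r]` with `t ≤ s`, the integrating factor `exp (-∫ g)` turns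
`y' ≤ g y + h` into `y (t + r) ≤ (y s + a₂) * exp a₁`. Averaging the resulting lower bound
for `y s` over `s ∈ [t, t + r]` against `∫ y ≤ a₃` gives the claim. -/

theorem LipschitzOnWith.comp_absolutelyContinuousOnInterval {X Y : Type*} [PseudoMetricSpace X]
    [PseudoMetricSpace Y] {φ : X → Y} {f : ℝ → X} {s : Set X} {K : NNReal} {a b : ℝ}
    (hφ : LipschitzOnWith K φ s) (hf : AbsolutelyContinuousOnInterval f a b)
    (hfs : MapsTo f (uIcc a b) s) : AbsolutelyContinuousOnInterval (φ ∘ f) a b := by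
  unfold AbsolutelyContinuousOnInterval at hf ⊢
  refine squeeze_zero' (.of_forall fun _ ↦ Finset.sum_nonneg fun _ _ ↦ dist_nonneg) ?_
    (by simpa using hf.const_mul (K : ℝ))
  rw [eventually_inf_principal]
  filter_upwards with E hE
  rw [Finset.mul_sum]
  gcongr with i hi
  exact hφ.dist_le_mul _ (hfs (hE.1 i hi).1) _ (hfs (hE.1 i hi).2)

theorem LocallyLipschitz.comp_absolutelyContinuousOnInterval {F Y : Type*}
    [SeminormedAddCommGroup F] [PseudoMetricSpace Y] {φ : F → Y} {f : ℝ → F} {a b : ℝ}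
    (hφ : LocallyLipschitz φ) (hf : AbsolutelyContinuousOnInterval f a b) :
    AbsolutelyContinuousOnInterval (φ ∘ f) a b := by
  have hcpt : IsCompact (f '' uIcc a b) := isCompact_uIcc.image_of_continuousOn hf.continuousOn
  obtain ⟨K, hK⟩ := LocallyLipschitzOn.exists_lipschitzOnWith_of_compact hcpt hφ.locallyLipschitzOn
  exact hK.comp_absolutelyContinuousOnInterval hf (mapsTo_image f _)

theorem le_mul_exp_integral_of_le_mul_add {y y' g h : ℝ → ℝ} {a b : ℝ} (hab : a ≤ b)
    (hy' : IntervalIntegrable y' volume a b) (hy : ∀ u ∈ Icc a b, y u = y a + ∫ v in a..u, y' v)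
    (hg : IntervalIntegrable g volume a b) (hg0 : ∀ u ∈ Icc a b, 0 ≤ g u)
    (hh : IntervalIntegrable h volume a b) (hh0 : ∀ u ∈ Icc a b, 0 ≤ h u)
    (hineq : ∀ᵐ u, u ∈ Icc a b → y' u ≤ g u * y u + h u) :
    y b ≤ (y a + ∫ u in a..b, h u) * Real.exp (∫ u in a..b, g u) := by
  set Y : ℝ → ℝ := fun u ↦ y a + ∫ v in a..u, y' v
  set G : ℝ → ℝ := fun u ↦ ∫ v in a..u, g v
  set E : ℝ → ℝ := fun u ↦ Real.exp (-G u)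
  have hYac : AbsolutelyContinuousOnInterval Y a b :=
    (LipschitzWith.const (y a)).lipschitzOnWith.absolutelyContinuousOnInterval.add
      (hy'.absolutelyContinuousOnInterval_intervalIntegral left_mem_uIcc)
  have hEac : AbsolutelyContinuousOnInterval E a b :=
    (Real.contDiff_exp.locallyLipschitz).comp_absolutelyContinuousOnInterval
      (hg.absolutelyContinuousOnInterval_intervalIntegral left_mem_uIcc).neg
  -- `E` is the integrating factor: `(Y * E)' = E * (y' - g * y) ≤ E * h ≤ h`.
  have hderiv : ∀ᵐ u ∂volume.restrict (Icc a b), deriv Y u * E u + Y u * deriv E u ≤ h u := by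
    filter_upwards [ae_restrict_mem measurableSet_Icc, ae_restrict_of_ae hineq,
      ae_restrict_of_ae hy'.ae_hasDerivAt_integral, ae_restrict_of_ae hg.ae_hasDerivAt_integral]
      with u hu hyu hY hG
    rw [← uIcc_of_le hab] at hu
    have hYu : deriv Y u = y' u := ((hY hu a left_mem_uIcc).const_add (y a)).deriv
    have hEu : deriv E u = -g u * E u := by
      simpa [E, mul_comm] using ((hG hu a left_mem_uIcc).neg.exp).deriv
    rw [uIcc_of_le hab] at hu
    have hE1 : E u ≤ 1 := Real.exp_le_one_iff.2 (neg_nonpos.2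
      (integral_nonneg hu.1 fun v hv ↦ hg0 v ⟨hv.1, hv.2.trans hu.2⟩))
    have hEpos : 0 < E u := Real.exp_pos _
    have hYy : Y u = y u := (hy u hu).symm
    rw [hYu, hEu, hYy]
    nlinarith [hh0 u hu, hyu hu]
  have hP : Y b * E b - Y a * E a ≤ ∫ u in a..b, h u := by
    rw [← hYac.integral_deriv_mul_eq_sub hEac]
    refine integral_mono_ae_restrict hab ?_ hh hderiv
    exact (hYac.intervalIntegrable_deriv.mul_continuousOn hEac.continuousOn).add
      (hEac.intervalIntegrable_deriv.continuousOn_mul hYac.continuousOn)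
  have hYb : Y b = y b := (hy b ⟨hab, le_rfl⟩).symm
  simp only [hYb, Y, E, G, integral_same, add_zero, neg_zero, Real.exp_zero, mul_one] at hP
  calc y b = y b * Real.exp (-G b) * Real.exp (G b) := by
        rw [mul_assoc, ← Real.exp_add, neg_add_cancel, Real.exp_zero, mul_one]
    _ ≤ (y a + ∫ u in a..b, h u) * Real.exp (G b) := by gcongr; linarith

theorem MeasureTheory.LocallyIntegrableOn.intervalIntegrable_of_Ici {f : ℝ → ℝ} {t₀ a b : ℝ}
    (hf : LocallyIntegrableOn f (Ici t₀)) (ha : t₀ ≤ a) (hb : t₀ ≤ b) :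
    IntervalIntegrable f volume a b :=
  (hf.integrableOn_compact_subset (fun _ hx ↦ le_trans (le_min ha hb) hx.1)
    isCompact_uIcc).intervalIntegrable

theorem integral_le_of_forall_integral_add_le {f : ℝ → ℝ} {t₀ r A s τ : ℝ}
    (hf0 : ∀ t, t₀ ≤ t → 0 ≤ f t) (hf : LocallyIntegrableOn f (Ici t₀))
    (hA : ∀ t, t₀ ≤ t → ∫ u in t..t + r, f u ≤ A) (hs : t₀ ≤ s) (hsτ : s ≤ τ) (hτ : τ ≤ s + r) :
    ∫ u in s..τ, f u ≤ A :=
  (integral_mono_interval le_rfl hsτ hτ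
    ((ae_restrict_mem measurableSet_Ioc).mono fun u hu ↦ hf0 u (hs.trans hu.1.le))
    (hf.intervalIntegrable_of_Ici hs (hs.trans (hsτ.trans hτ)))).trans (hA s hs)

theorem uniform_gronwall_general
    (t₀ r a₁ a₂ a₃ : ℝ) (hr : 0 < r)
    (g h y y' : ℝ → ℝ)
    (hg0 : ∀ t, t₀ ≤ t → 0 ≤ g t) (hh0 : ∀ t, t₀ ≤ t → 0 ≤ h t)
    (hy0 : ∀ t, t₀ ≤ t → 0 ≤ y t)
    (hgL : LocallyIntegrableOn g (Set.Ici t₀))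
    (hhL : LocallyIntegrableOn h (Set.Ici t₀))
    (hyL : LocallyIntegrableOn y (Set.Ici t₀))
    (hy'L : LocallyIntegrableOn y' (Set.Ici t₀))
    (hftc : ∀ s t, t₀ ≤ s → s ≤ t → y t = y s + ∫ u in s..t, y' u)
    (hineq : ∀ᵐ t : ℝ ∂volume, t₀ ≤ t → y' t ≤ g t * y t + h t)
    (hga : ∀ t, t₀ ≤ t → (∫ s in t..t + r, g s) ≤ a₁)
    (hha : ∀ t, t₀ ≤ t → (∫ s in t..t + r, h s) ≤ a₂)
    (hya : ∀ t, t₀ ≤ t → (∫ s in t..t + r, y s) ≤ a₃) :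
    ∀ t, t₀ ≤ t → y (t + r) ≤ (a₃ / r + a₂) * Real.exp a₁ := by
  intro t ht
  have hT : t₀ ≤ t + r := by linarith
  have hlower : ∀ s ∈ Icc t (t + r), y (t + r) / Real.exp a₁ - a₂ ≤ y s := by
    rintro s ⟨hts, hsT⟩
    have hs : t₀ ≤ s := ht.trans hts
    have hgron := le_mul_exp_integral_of_le_mul_add hsT
      (hy'L.intervalIntegrable_of_Ici hs hT) (fun u hu ↦ hftc s u hs hu.1)
      (hgL.intervalIntegrable_of_Ici hs hT) (fun u hu ↦ hg0 u (hs.trans hu.1))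
      (hhL.intervalIntegrable_of_Ici hs hT) (fun u hu ↦ hh0 u (hs.trans hu.1))
      (hineq.mono fun u hu hu' ↦ hu (hs.trans hu'.1))
    have hG := integral_le_of_forall_integral_add_le hg0 hgL hga hs hsT (by linarith)
    have hH := integral_le_of_forall_integral_add_le hh0 hhL hha hs hsT (by linarith)
    have hH0 : 0 ≤ ∫ u in s..t + r, h u := integral_nonneg hsT fun u hu ↦ hh0 u (hs.trans hu.1)
    rw [sub_le_iff_le_add, div_le_iff₀ (Real.exp_pos _)]
    exact hgron.trans (mul_le_mul (by linarith) (Real.exp_le_exp.2 hG) (Real.exp_pos _).le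
      (by linarith [hy0 s hs]))
  have hmean : r * (y (t + r) / Real.exp a₁ - a₂) ≤ a₃ :=
    calc r * (y (t + r) / Real.exp a₁ - a₂)
        = ∫ _ in t..t + r, (y (t + r) / Real.exp a₁ - a₂) := by
          rw [intervalIntegral.integral_const, add_sub_cancel_left, smul_eq_mul]
      _ ≤ ∫ s in t..t + r, y s :=
        integral_mono_on (by linarith) intervalIntegrable_const
          (hyL.intervalIntegrable_of_Ici ht hT) hlower
      _ ≤ a₃ := hya t ht
  rw [← div_le_iff₀ (Real.exp_pos _)]
  linarith [(le_div_iff₀' hr).2 hmean]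

/-- The Uniform Gronwall Lemma. -/
theorem uniform_gronwall
    (t₀ r a₁ a₂ a₃ : ℝ) (hr : 0 < r) (ha₁ : 0 < a₁) (ha₂ : 0 < a₂) (ha₃ : 0 < a₃)
    (g h y y' : ℝ → ℝ)
    (hg0 : ∀ t, t₀ ≤ t → 0 ≤ g t) (hh0 : ∀ t, t₀ ≤ t → 0 ≤ h t)
    (hy0 : ∀ t, t₀ ≤ t → 0 ≤ y t)
    (hgL : LocallyIntegrableOn g (Set.Ici t₀))
    (hhL : LocallyIntegrableOn h (Set.Ici t₀))
    (hyL : LocallyIntegrableOn y (Set.Ici t₀))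
    (hy'L : LocallyIntegrableOn y' (Set.Ici t₀))
    (hftc : ∀ s t, t₀ ≤ s → s ≤ t → y t = y s + ∫ u in s..t, y' u)
    (hineq : ∀ᵐ t : ℝ ∂volume, t₀ ≤ t → y' t ≤ g t * y t + h t)
    (hga : ∀ t, t₀ ≤ t → (∫ s in t..t + r, g s) ≤ a₁)
    (hha : ∀ t, t₀ ≤ t → (∫ s in t..t + r, h s) ≤ a₂)
    (hya : ∀ t, t₀ ≤ t → (∫ s in t..t + r, y s) ≤ a₃) :
    ∀ t, t₀ ≤ t → y (t + r) ≤ (a₃ / r + a₂) * Real.exp a₁ :=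
  uniform_gronwall_general t₀ r a₁ a₂ a₃ hr g h y y' hg0 hh0 hy0 hgL hhL hyL hy'L hftc hineq hga hha
    hya
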